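/- arXiv:1402.2637 — 4 statements merged into one kernel-verified Lean document; each statement's English description precedes it below -/
import Mathlib

section
/- Let S : R^{m×n} → R^q be linear, K' ⊆ R^{m×n} with M = K' − K', and suppose N(S,1) ∩ M = {0}. Let M₀ = σ u vᵀ ∈ K' be rank one (σ > 0, ‖u‖ = ‖v‖ = 1). If for every nonzero X ∈ N(S,2) ∩ M, either u ∉ col(X) or v ∉ row(X), then M₀ is the unique matrix of minimal rank in {W ∈ K' : S(W) = S(M₀)}; i.e., any W ∈ K' with rank W ≤ 1 and S(W) = S(M₀) satisfies W = M₀. -/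
open Matrix

/-!
If `W ≠ M₀` were another admissible matrix of rank at most one, `X = M₀ - W` would be a nonzero
element of `N(S,2) ∩ M`, of rank exactly two by `N(S,1) ∩ M = {0}`. Its column space lies in
`span{u} + col(W)`, of dimension at most two, so it equals that space and contains `u`;
transposing, `v ∈ row(X)`, contradicting the hypothesis on `N(S,2) ∩ M`.
-/

namespace Submodule

variable {K V : Type*} [DivisionRing K] [AddCommGroup V] [Module K V]

lemma finrank_span_singleton_le (x : V) : Module.finrank K (K ∙ x) ≤ 1 := by
  simpa using finrank_span_le_card (R := K) ({x} : Set V)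

lemma mem_of_le_span_singleton_sup [FiniteDimensional K V] {C P : Submodule K V} {x : V}
    (hle : C ≤ (K ∙ x) ⊔ P)
    (hdim : Module.finrank K P + 1 ≤ Module.finrank K C) : x ∈ C := by
  have hsup : Module.finrank K ↥((K ∙ x) ⊔ P) ≤ Module.finrank K C :=
    calc Module.finrank K ↥((K ∙ x) ⊔ P)
        ≤ Module.finrank K (K ∙ x) + Module.finrank K P := finrank_add_le_finrank_add_finrank _ _
      _ ≤ Module.finrank K C := by linarith [finrank_span_singleton_le (K := K) x]
  -- the dimension count forces `C = K ∙ x ⊔ P`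
  rw [eq_of_le_of_finrank_le hle hsup]
  exact mem_sup_left (mem_span_singleton_self x)

end Submodule

namespace Matrix

variable {K m n : Type*} [Field K] [Fintype n]

lemma range_mulVecLin_sub_le (A B : Matrix m n K) :
    LinearMap.range (A - B).mulVecLin ≤
      LinearMap.range A.mulVecLin ⊔ LinearMap.range B.mulVecLin := by
  rintro _ ⟨x, rfl⟩
  rw [mulVecLin_apply, sub_mulVec]
  exact Submodule.sub_mem_sup ⟨x, rfl⟩ ⟨x, rfl⟩

lemma rank_sub_le [Fintype m] (A B : Matrix m n K) : (A - B).rank ≤ A.rank + B.rank :=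
  (Submodule.finrank_mono (range_mulVecLin_sub_le A B)).trans
    (Submodule.finrank_add_le_finrank_add_finrank _ _)

lemma range_mulVecLin_vecMulVec_le (u : m → K) (w : n → K) :
    LinearMap.range (vecMulVec u w).mulVecLin ≤ K ∙ u := by
  rintro _ ⟨x, rfl⟩
  rw [mulVecLin_apply, vecMulVec_mulVec, op_smul_eq_smul]
  exact Submodule.smul_mem _ _ (Submodule.mem_span_singleton_self u)

lemma mem_range_mulVec_vecMulVec_sub [Fintype m] {u : m → K} (w : n → K) {W : Matrix m n K}
    (hW : W.rank ≤ 1) (hrank : 2 ≤ (vecMulVec u w - W).rank) :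
    u ∈ Set.range (vecMulVec u w - W).mulVec := by
  have hle : LinearMap.range (vecMulVec u w - W).mulVecLin ≤
      (K ∙ u) ⊔ LinearMap.range W.mulVecLin :=
    (range_mulVecLin_sub_le _ _).trans (sup_le_sup_right (range_mulVecLin_vecMulVec_le u w) _)
  exact Submodule.mem_of_le_span_singleton_sup hle (by unfold rank at hW hrank; omega)

end Matrix

theorem stmt4_general (m n q : ℕ) (S : Matrix (Fin m) (Fin n) ℝ →ₗ[ℝ] (Fin q → ℝ))
    (K' : Set (Matrix (Fin m) (Fin n) ℝ))
    (hN1 : ∀ X : Matrix (Fin m) (Fin n) ℝ,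
      (∃ X₁ ∈ K', ∃ X₂ ∈ K', X = X₁ - X₂) → X.rank ≤ 1 → S X = 0 → X = 0)
    (σ : ℝ) (u : Fin m → ℝ) (v : Fin n → ℝ)
    (M₀ : Matrix (Fin m) (Fin n) ℝ) (hM₀ : M₀ = σ • vecMulVec u v) (hM₀K : M₀ ∈ K')
    (hcond : ∀ X : Matrix (Fin m) (Fin n) ℝ, X ≠ 0 →
      (∃ X₁ ∈ K', ∃ X₂ ∈ K', X = X₁ - X₂) → X.rank ≤ 2 → S X = 0 →
      u ∉ Set.range X.mulVec ∨ v ∉ Set.range Xᵀ.mulVec) :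
    ∀ W ∈ K', W.rank ≤ 1 → S W = S M₀ → W = M₀ := by
  intro W hWK hWrank hSW
  by_contra hne
  have hM₀u : M₀ = vecMulVec u (σ • v) := by rw [hM₀, vecMulVec_smul]
  have hM₀v : M₀ᵀ = vecMulVec v (σ • u) := by
    rw [hM₀u, transpose_vecMulVec, smul_vecMulVec, vecMulVec_smul]
  have hX0 : M₀ - W ≠ 0 := sub_ne_zero.2 (Ne.symm hne)
  have hXK : ∃ X₁ ∈ K', ∃ X₂ ∈ K', M₀ - W = X₁ - X₂ := ⟨M₀, hM₀K, W, hWK, rfl⟩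
  have hSX : S (M₀ - W) = 0 := by rw [map_sub, hSW, sub_self]
  have hX2 : 2 ≤ (M₀ - W).rank := by
    have := mt (hN1 _ hXK · hSX) hX0
    omega
  have hXle : (M₀ - W).rank ≤ 2 :=
    (rank_sub_le _ _).trans (add_le_add (hM₀u ▸ rank_vecMulVec_le u (σ • v)) hWrank)
  have hcol : u ∈ Set.range (M₀ - W).mulVec := by
    rw [hM₀u] at hX2 ⊢
    exact mem_range_mulVec_vecMulVec_sub _ hWrank hX2
  have hrow : v ∈ Set.range (M₀ - W)ᵀ.mulVec := by
    rw [← rank_transpose, transpose_sub, hM₀v] at hX2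
    rw [transpose_sub, hM₀v]
    exact mem_range_mulVec_vecMulVec_sub _ (by rwa [rank_transpose]) hX2
  exact (hcond _ hX0 hXK hXle hSX).elim (· hcol) (· hrow)

/-- Deterministic sufficient condition for identifiability: if `N(S,1) ∩ M = {0}`
and for every nonzero `X ∈ N(S,2) ∩ M` either `u ∉ col(X)` or `v ∉ row(X)`, then
`M₀ = σ u vᵀ` is the unique rank-≤1 matrix in `K'` with observation `S(M₀)`. -/
theorem stmt4 (m n q : ℕ) (S : Matrix (Fin m) (Fin n) ℝ →ₗ[ℝ] (Fin q → ℝ))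
    (K' : Set (Matrix (Fin m) (Fin n) ℝ))
    (hN1 : ∀ X : Matrix (Fin m) (Fin n) ℝ,
      (∃ X₁ ∈ K', ∃ X₂ ∈ K', X = X₁ - X₂) → X.rank ≤ 1 → S X = 0 → X = 0)
    (σ : ℝ) (hσ : 0 < σ) (u : Fin m → ℝ) (v : Fin n → ℝ)
    (hu : ∑ i, u i ^ 2 = 1) (hv : ∑ j, v j ^ 2 = 1)
    (M₀ : Matrix (Fin m) (Fin n) ℝ) (hM₀ : M₀ = σ • vecMulVec u v) (hM₀K : M₀ ∈ K')
    (hcond : ∀ X : Matrix (Fin m) (Fin n) ℝ, X ≠ 0 →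
      (∃ X₁ ∈ K', ∃ X₂ ∈ K', X = X₁ - X₂) → X.rank ≤ 2 → S X = 0 →
      u ∉ Set.range X.mulVec ∨ v ∉ Set.range Xᵀ.mulVec) :
    ∀ W ∈ K', W.rank ≤ 1 → S W = S M₀ → W = M₀ :=
  stmt4_general m n q S K' hN1 σ u v M₀ hM₀ hM₀K hcond
end

section
/- Let K ⊆ R^m × R^n, S : R^m × R^n → R^q bilinear with lifted linear operator 𝒮 : R^{m×n} → R^q satisfying 𝒮(x yᵀ) = S(x, y) for all (x, y), and K' ⊆ R^{m×n} satisfying K' ∩ {W : rank W ≤ 1} = {x yᵀ : (x,y) ∈ K}. Fix an observation z. If the set K_opt(z) = {(x,y) ∈ K : S(x,y) = z} is nonempty, then the set of minimizers of rank over {W ∈ K' : 𝒮(W)=z}, denoted K'_opt(z), is a subset of {x yᵀ : (x,y) ∈ K_opt(z)}; moreover K'_opt(z) = {x yᵀ : (x,y) ∈ K_opt(z)} if and only if it is not the case that {0} is a proper subset of {x yᵀ : (x,y) ∈ K_opt(z)}. -/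
open Matrix

lemma rank_vecMulVec_le' {m n : ℕ} (x : Fin m → ℝ) (y : Fin n → ℝ) :
    (vecMulVec x y).rank ≤ 1 := by
  rw [vecMulVec_eq (Fin 1)]
  exact (Matrix.rank_mul_le_left _ _).trans
    ((Matrix.rank_le_card_width _).trans_eq (Fintype.card_fin 1))

lemma matrix_rank_eq_zero_iff' {m n : ℕ} (W : Matrix (Fin m) (Fin n) ℝ) :
    W.rank = 0 ↔ W = 0 := by
  constructor
  · intro h
    rw [Matrix.rank, Submodule.finrank_eq_zero, LinearMap.range_eq_bot] at h
    ext i j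
    have := congrFun (LinearMap.congr_fun h (Pi.single j 1)) i
    simpa [Matrix.mulVecLin, Matrix.mulVec_single] using this
  · rintro rfl; exact Matrix.rank_zero

/-- Equivalence of the bilinear feasibility problem and its lifted rank-minimization
problem: given a lifted linear operator `Slin` with `Slin(x yᵀ) = S(x,y)` and `K'`
whose rank-≤1 slice equals `{x yᵀ : (x,y) ∈ K}`, if the bilinear problem is feasible
for the observation `z`, then the set of rank-minimizers of the lifted problem is
contained in `{x yᵀ : (x,y) ∈ K_opt(z)}`, with equality iff `{0}` is not a proper
subset of `{x yᵀ : (x,y) ∈ K_opt(z)}`. -/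
theorem stmt15 (m n q : ℕ)
    (K : Set ((Fin m → ℝ) × (Fin n → ℝ)))
    (Slin : Matrix (Fin m) (Fin n) ℝ →ₗ[ℝ] (Fin q → ℝ))
    (S : (Fin m → ℝ) → (Fin n → ℝ) → (Fin q → ℝ))
    (hlift : ∀ x y, Slin (vecMulVec x y) = S x y)
    (K' : Set (Matrix (Fin m) (Fin n) ℝ))
    (hK' : K' ∩ {W | W.rank ≤ 1} = {W | ∃ p ∈ K, W = vecMulVec p.1 p.2})
    (z : Fin q → ℝ)
    (hfeas : {p ∈ K | S p.1 p.2 = z}.Nonempty) :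
    {W ∈ K' | Slin W = z ∧ ∀ W' ∈ K', Slin W' = z → W.rank ≤ W'.rank}
        ⊆ {W | ∃ p ∈ {p ∈ K | S p.1 p.2 = z}, W = vecMulVec p.1 p.2}
    ∧ ({W ∈ K' | Slin W = z ∧ ∀ W' ∈ K', Slin W' = z → W.rank ≤ W'.rank}
          = {W | ∃ p ∈ {p ∈ K | S p.1 p.2 = z}, W = vecMulVec p.1 p.2}
        ↔ ¬ (({0} : Set (Matrix (Fin m) (Fin n) ℝ))
              ⊂ {W | ∃ p ∈ {p ∈ K | S p.1 p.2 = z}, W = vecMulVec p.1 p.2})) := by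
  obtain ⟨p0, hp0K, hp0S⟩ := hfeas
  set T : Set (Matrix (Fin m) (Fin n) ℝ) :=
    {W | ∃ p ∈ {p ∈ K | S p.1 p.2 = z}, W = vecMulVec p.1 p.2} with hT
  set M : Set (Matrix (Fin m) (Fin n) ℝ) :=
    {W ∈ K' | Slin W = z ∧ ∀ W' ∈ K', Slin W' = z → W.rank ≤ W'.rank} with hM
  -- every element of T is in K' and feasible
  have hTK' : ∀ W ∈ T, W ∈ K' ∧ Slin W = z ∧ W.rank ≤ 1 := by
    rintro W ⟨p, ⟨hpK, hpS⟩, rfl⟩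
    have hmem : vecMulVec p.1 p.2 ∈ K' ∩ {W | W.rank ≤ 1} := by
      rw [hK']; exact ⟨p, hpK, rfl⟩
    exact ⟨hmem.1, by rw [hlift, hpS], hmem.2⟩
  have hW0T : vecMulVec p0.1 p0.2 ∈ T := ⟨p0, ⟨hp0K, hp0S⟩, rfl⟩
  obtain ⟨hW0K', hW0S, hW0r⟩ := hTK' _ hW0T
  -- minimizers are in T
  have hsub : M ⊆ T := by
    rintro W ⟨hWK', hWS, hWmin⟩
    have hr : W.rank ≤ 1 := (hWmin _ hW0K' hW0S).trans hW0r
    have : W ∈ K' ∩ {W | W.rank ≤ 1} := ⟨hWK', hr⟩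
    rw [hK'] at this
    obtain ⟨p, hpK, rfl⟩ := this
    exact ⟨p, ⟨hpK, by rw [← hlift p.1 p.2]; exact hWS⟩, rfl⟩
  refine ⟨hsub, ?_⟩
  by_cases h0 : (0 : Matrix (Fin m) (Fin n) ℝ) ∈ T
  · -- 0 is feasible with rank 0, so M = {0}
    obtain ⟨h0K', h0S, -⟩ := hTK' _ h0
    have hM0 : M = {0} := by
      apply Set.eq_singleton_iff_unique_mem.mpr
      constructor
      · exact ⟨h0K', h0S, fun W' _ _ => by simp [Matrix.rank_zero]⟩
      · rintro W ⟨hWK', hWS, hWmin⟩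
        have : W.rank ≤ (0 : Matrix (Fin m) (Fin n) ℝ).rank := hWmin _ h0K' h0S
        rw [Matrix.rank_zero, Nat.le_zero] at this
        exact (matrix_rank_eq_zero_iff' W).mp this
    rw [hM0]
    constructor
    · intro h hss
      rw [h] at hss
      exact hss.ne rfl
    · intro h
      by_contra hne
      exact h (Set.ssubset_iff_subset_ne.mpr
        ⟨Set.singleton_subset_iff.mpr h0, fun heq => hne heq⟩)
  · -- 0 not in T: M = T and ¬({0} ⊂ T)
    have hMT : M = T := by
      apply Set.Subset.antisymm hsub
      intro W hWT
      obtain ⟨hWK', hWS, hWr⟩ := hTK' _ hWT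
      refine ⟨hWK', hWS, fun W' hW'K' hW'S => ?_⟩
      have hW'ne : W'.rank ≠ 0 := by
        intro hr0
        have hW'0 : W' = 0 := (matrix_rank_eq_zero_iff' W').mp hr0
        apply h0
        have : W' ∈ K' ∩ {W | W.rank ≤ 1} :=
          ⟨hW'K', by show W'.rank ≤ 1; rw [hr0]; exact zero_le_one⟩
        rw [hK'] at this
        obtain ⟨p, hpK, hpe⟩ := this
        exact ⟨p, ⟨hpK, by rw [← hlift p.1 p.2, ← hpe]; exact hW'S⟩,
          by rw [← hpe, hW'0]⟩
      exact hWr.trans (Nat.one_le_iff_ne_zero.mpr hW'ne)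
    simp only [hMT, true_iff]
    intro hss
    exact h0 (hss.1 rfl)
end

section
/- Let 𝒮 : R^{m×n} → R^q be linear, K' ⊆ R^{m×n}, M₀ = σ u vᵀ rank one with ‖u‖ = ‖v‖ = 1, σ > 0. Suppose X ∈ R^{m×n} has singular value decomposition X = σ* u₁ v₁ᵀ + σ* u₂ v₂ᵀ with equal singular values σ* > 0, orthonormal {u₁,u₂} and {v₁,v₂}, and suppose u = α₁u₁ + α₂u₂, v = α₃v₁ + α₄v₂ with α₁² + α₂² = α₃² + α₄² = 1. If α₁α₃ + α₂α₄ ≤ 0, then rank(M₀ − X) ≥ 2. -/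
open Matrix BigOperators

/-- Key deterministic step of the equal-singular-value corollary: if
`X = σ* u₁v₁ᵀ + σ* u₂v₂ᵀ` has equal singular values, `M₀ = σ u vᵀ` with
`u = α₁u₁ + α₂u₂`, `v = α₃v₁ + α₄v₂`, `α₁² + α₂² = α₃² + α₄² = 1`, and
`α₁α₃ + α₂α₄ ≤ 0`, then `rank(M₀ − X) ≥ 2`. -/
theorem stmt16 (m n : ℕ) (σ σs : ℝ) (hσ : 0 < σ) (hσs : 0 < σs)
    (u₁ u₂ : Fin m → ℝ) (v₁ v₂ : Fin n → ℝ)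
    (hu₁ : ∑ i, u₁ i ^ 2 = 1) (hu₂ : ∑ i, u₂ i ^ 2 = 1) (hu₁₂ : ∑ i, u₁ i * u₂ i = 0)
    (hv₁ : ∑ j, v₁ j ^ 2 = 1) (hv₂ : ∑ j, v₂ j ^ 2 = 1) (hv₁₂ : ∑ j, v₁ j * v₂ j = 0)
    (α₁ α₂ α₃ α₄ : ℝ) (hα12 : α₁ ^ 2 + α₂ ^ 2 = 1) (hα34 : α₃ ^ 2 + α₄ ^ 2 = 1)
    (u : Fin m → ℝ) (v : Fin n → ℝ)
    (hu : u = α₁ • u₁ + α₂ • u₂) (hv : v = α₃ • v₁ + α₄ • v₂)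
    (X : Matrix (Fin m) (Fin n) ℝ)
    (hX : X = σs • vecMulVec u₁ v₁ + σs • vecMulVec u₂ v₂)
    (M₀ : Matrix (Fin m) (Fin n) ℝ) (hM₀ : M₀ = σ • vecMulVec u v)
    (hip : α₁ * α₃ + α₂ * α₄ ≤ 0) :
    2 ≤ (M₀ - X).rank := by
  -- inner products with u
  have du : ∀ a : Fin m → ℝ, ∑ k, a k * u k
      = α₁ * (∑ k, a k * u₁ k) + α₂ * (∑ k, a k * u₂ k) := by
    intro a
    subst hu
    simp only [Pi.add_apply, Pi.smul_apply, smul_eq_mul]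
    rw [Finset.sum_congr rfl (fun k _ =>
      show a k * (α₁ * u₁ k + α₂ * u₂ k)
        = α₁ * (a k * u₁ k) + α₂ * (a k * u₂ k) by ring),
      Finset.sum_add_distrib, ← Finset.mul_sum, ← Finset.mul_sum]
  have dv : ∀ b : Fin n → ℝ, ∑ l, v l * b l
      = α₃ * (∑ l, v₁ l * b l) + α₄ * (∑ l, v₂ l * b l) := by
    intro b
    subst hv
    simp only [Pi.add_apply, Pi.smul_apply, smul_eq_mul]
    rw [Finset.sum_congr rfl (fun l _ =>
      show (α₃ * v₁ l + α₄ * v₂ l) * b l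
        = α₃ * (v₁ l * b l) + α₄ * (v₂ l * b l) by ring),
      Finset.sum_add_distrib, ← Finset.mul_sum, ← Finset.mul_sum]
  have hu₂₁ : ∑ k, u₂ k * u₁ k = 0 := by
    rw [← hu₁₂]; exact Finset.sum_congr rfl fun k _ => mul_comm _ _
  have hv₂₁ : ∑ l, v₂ l * v₁ l = 0 := by
    rw [← hv₁₂]; exact Finset.sum_congr rfl fun l _ => mul_comm _ _
  have hu₁' : ∑ k, u₁ k * u₁ k = 1 := by
    rw [← hu₁]; exact Finset.sum_congr rfl fun k _ => (sq (u₁ k)).symm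
  have hu₂' : ∑ k, u₂ k * u₂ k = 1 := by
    rw [← hu₂]; exact Finset.sum_congr rfl fun k _ => (sq (u₂ k)).symm
  have hv₁' : ∑ l, v₁ l * v₁ l = 1 := by
    rw [← hv₁]; exact Finset.sum_congr rfl fun l _ => (sq (v₁ l)).symm
  have hv₂' : ∑ l, v₂ l * v₂ l = 1 := by
    rw [← hv₂]; exact Finset.sum_congr rfl fun l _ => (sq (v₂ l)).symm
  -- entries of the compressed matrix
  have entry : ∀ (a : Fin m → ℝ) (b : Fin n → ℝ),
      ∑ l, (∑ k, a k * (M₀ - X) k l) * b l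
      = σ * (∑ k, a k * u k) * (∑ l, v l * b l)
        - σs * (∑ k, a k * u₁ k) * (∑ l, v₁ l * b l)
        - σs * (∑ k, a k * u₂ k) * (∑ l, v₂ l * b l) := by
    intro a b
    have inner : ∀ l, (∑ k, a k * (M₀ - X) k l)
        = σ * (∑ k, a k * u k) * v l - σs * (∑ k, a k * u₁ k) * v₁ l
          - σs * (∑ k, a k * u₂ k) * v₂ l := by
      intro l
      rw [hM₀, hX]
      simp only [Matrix.sub_apply, Matrix.smul_apply, Matrix.add_apply,
        vecMulVec_apply, smul_eq_mul]
      rw [Finset.sum_congr rfl (fun k _ =>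
        show a k * (σ * (u k * v l) - (σs * (u₁ k * v₁ l) + σs * (u₂ k * v₂ l)))
          = σ * (a k * u k) * v l
            - (σs * (a k * u₁ k) * v₁ l + σs * (a k * u₂ k) * v₂ l) by ring),
        Finset.sum_sub_distrib, Finset.sum_add_distrib]
      have e1 : ∑ k, σ * (a k * u k) * v l = σ * (∑ k, a k * u k) * v l := by
        simp only [Finset.mul_sum, Finset.sum_mul]
      have e2 : ∑ k, σs * (a k * u₁ k) * v₁ l = σs * (∑ k, a k * u₁ k) * v₁ l := by
        simp only [Finset.mul_sum, Finset.sum_mul]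
      have e3 : ∑ k, σs * (a k * u₂ k) * v₂ l = σs * (∑ k, a k * u₂ k) * v₂ l := by
        simp only [Finset.mul_sum, Finset.sum_mul]
      rw [e1, e2, e3]; ring
    rw [Finset.sum_congr rfl fun l _ => by rw [inner l]]
    rw [Finset.sum_congr rfl (fun l _ =>
      show (σ * (∑ k, a k * u k) * v l - σs * (∑ k, a k * u₁ k) * v₁ l
          - σs * (∑ k, a k * u₂ k) * v₂ l) * b l
        = σ * (∑ k, a k * u k) * (v l * b l)
          - (σs * (∑ k, a k * u₁ k) * (v₁ l * b l)
            + σs * (∑ k, a k * u₂ k) * (v₂ l * b l)) by ring),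
      Finset.sum_sub_distrib, Finset.sum_add_distrib,
      ← Finset.mul_sum, ← Finset.mul_sum, ← Finset.mul_sum]
    ring
  -- the compression
  set U : Matrix (Fin 2) (Fin m) ℝ := Matrix.of ![u₁, u₂] with hU
  set V : Matrix (Fin 2) (Fin n) ℝ := Matrix.of ![v₁, v₂] with hV
  set A : Matrix (Fin 2) (Fin 2) ℝ := U * (M₀ - X) * Vᵀ with hAdef
  have hA : A = !![σ * (α₁ * α₃) - σs, σ * (α₁ * α₄);
                   σ * (α₂ * α₃), σ * (α₂ * α₄) - σs] := by
    have hAe : ∀ i j, A i j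
        = ∑ l, (∑ k, (![u₁, u₂] i) k * (M₀ - X) k l) * (![v₁, v₂] j) l := by
      intro i j
      rw [hAdef]
      simp only [Matrix.mul_apply, Matrix.transpose_apply, hU, hV, Matrix.of_apply,
        Finset.sum_mul]
    ext i j
    fin_cases i <;> fin_cases j <;>
      rw [hAe] <;>
      simp only [Matrix.cons_val', Matrix.cons_val_zero, Matrix.cons_val_one,
        Matrix.head_cons, Fin.mk_zero, Fin.mk_one, Fin.isValue] <;>
      rw [entry, du, dv] <;>
      simp [hu₁', hu₂', hv₁', hv₂', hu₁₂, hu₂₁, hv₁₂, hv₂₁] <;> ring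
  have hdet : A.det = σs * (σs - σ * (α₁ * α₃ + α₂ * α₄)) := by
    rw [hA, Matrix.det_fin_two_of]; ring
  have hdetpos : 0 < A.det := by
    rw [hdet]
    have : σ * (α₁ * α₃ + α₂ * α₄) ≤ 0 :=
      mul_nonpos_of_nonneg_of_nonpos hσ.le hip
    nlinarith
  have hunit : IsUnit A := by
    rw [Matrix.isUnit_iff_isUnit_det]
    exact isUnit_iff_ne_zero.mpr hdetpos.ne'
  have hrankA : A.rank = 2 := by
    rw [Matrix.rank_of_isUnit A hunit]; simp
  calc (2 : ℕ) = A.rank := hrankA.symm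
    _ ≤ (U * (M₀ - X)).rank := Matrix.rank_mul_le_left _ _
    _ ≤ (M₀ - X).rank := Matrix.rank_mul_le_right _ _
end

section
/- With the setup of the previous statement (X = σ* u₁v₁ᵀ + σ* u₂v₂ᵀ with equal singular values, u = α₁u₁ + α₂u₂, v = α₃v₁ + α₄v₂, unit coefficient vectors), if rank(M₀ − X) ≤ 1 and M₀ − X ≠ 0, then α₁α₃ + α₂α₄ = σ*/σ > 0. -/
open Matrix BigOperators

/-- Converse step of the equal-singular-value corollary: with
`X = σ* u₁v₁ᵀ + σ* u₂v₂ᵀ` (equal singular values), `M₀ = σ u vᵀ`,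
`u = α₁u₁ + α₂u₂`, `v = α₃v₁ + α₄v₂`, unit coefficient vectors, if
`rank(M₀ − X) ≤ 1` and `M₀ − X ≠ 0`, then `α₁α₃ + α₂α₄ = σ*/σ > 0`. -/
theorem stmt17 (m n : ℕ) (σ σs : ℝ) (hσ : 0 < σ) (hσs : 0 < σs)
    (u₁ u₂ : Fin m → ℝ) (v₁ v₂ : Fin n → ℝ)
    (hu₁ : ∑ i, u₁ i ^ 2 = 1) (hu₂ : ∑ i, u₂ i ^ 2 = 1) (hu₁₂ : ∑ i, u₁ i * u₂ i = 0)
    (hv₁ : ∑ j, v₁ j ^ 2 = 1) (hv₂ : ∑ j, v₂ j ^ 2 = 1) (hv₁₂ : ∑ j, v₁ j * v₂ j = 0)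
    (α₁ α₂ α₃ α₄ : ℝ) (hα12 : α₁ ^ 2 + α₂ ^ 2 = 1) (hα34 : α₃ ^ 2 + α₄ ^ 2 = 1)
    (u : Fin m → ℝ) (v : Fin n → ℝ)
    (hu : u = α₁ • u₁ + α₂ • u₂) (hv : v = α₃ • v₁ + α₄ • v₂)
    (X : Matrix (Fin m) (Fin n) ℝ)
    (hX : X = σs • vecMulVec u₁ v₁ + σs • vecMulVec u₂ v₂)
    (M₀ : Matrix (Fin m) (Fin n) ℝ) (hM₀ : M₀ = σ • vecMulVec u v)
    (hrank : (M₀ - X).rank ≤ 1) (hne : M₀ - X ≠ 0) :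
    α₁ * α₃ + α₂ * α₄ = σs / σ ∧ 0 < σs / σ := by
  have hpos : 0 < σs / σ := div_pos hσs hσ
  refine ⟨?_, hpos⟩
  set A := M₀ - X with hA
  -- entries of A
  have hAij : ∀ i j, A i j = σ * (α₁ * u₁ i + α₂ * u₂ i) * (α₃ * v₁ j + α₄ * v₂ j)
      - σs * (u₁ i * v₁ j) - σs * (u₂ i * v₂ j) := by
    intro i j
    simp [hA, hM₀, hX, hu, hv, Matrix.sub_apply, Matrix.add_apply, Matrix.smul_apply,
      vecMulVec_apply, Pi.add_apply, Pi.smul_apply, smul_eq_mul]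
    ring
  -- compression matrices
  set U : Matrix (Fin m) (Fin 2) ℝ := Matrix.of (fun i p => if p = 0 then u₁ i else u₂ i) with hU
  set V : Matrix (Fin n) (Fin 2) ℝ := Matrix.of (fun j q => if q = 0 then v₁ j else v₂ j) with hV
  set B : Matrix (Fin 2) (Fin 2) ℝ := Uᵀ * A * V with hB
  -- rank of B is at most 1
  have hrB : B.rank ≤ 1 :=
    le_trans (Matrix.rank_mul_le_left _ _) (le_trans (Matrix.rank_mul_le_right _ _) hrank)
  -- inner sums
  have key1 : ∀ j, ∑ i, u₁ i * A i j =
      σ * α₁ * (α₃ * v₁ j + α₄ * v₂ j) - σs * v₁ j := by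
    intro j
    calc ∑ i, u₁ i * A i j
        = (σ * α₁ * (α₃ * v₁ j + α₄ * v₂ j) - σs * v₁ j) * (∑ i, u₁ i ^ 2)
          + (σ * α₂ * (α₃ * v₁ j + α₄ * v₂ j) - σs * v₂ j) * (∑ i, u₁ i * u₂ i) := by
          rw [Finset.mul_sum, Finset.mul_sum, ← Finset.sum_add_distrib]
          exact Finset.sum_congr rfl fun i _ => by rw [hAij]; ring
      _ = _ := by rw [hu₁, hu₁₂]; ring
  have key2 : ∀ j, ∑ i, u₂ i * A i j =
      σ * α₂ * (α₃ * v₁ j + α₄ * v₂ j) - σs * v₂ j := by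
    intro j
    calc ∑ i, u₂ i * A i j
        = (σ * α₂ * (α₃ * v₁ j + α₄ * v₂ j) - σs * v₂ j) * (∑ i, u₂ i ^ 2)
          + (σ * α₁ * (α₃ * v₁ j + α₄ * v₂ j) - σs * v₁ j) * (∑ i, u₁ i * u₂ i) := by
          rw [Finset.mul_sum, Finset.mul_sum, ← Finset.sum_add_distrib]
          exact Finset.sum_congr rfl fun i _ => by rw [hAij]; ring
      _ = _ := by rw [hu₂, hu₁₂]; ring
  -- entries of B
  have hBpq : ∀ p q, B p q = ∑ j, (∑ i, U i p * A i j) * V j q := by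
    intro p q
    rw [hB, Matrix.mul_apply]
    refine Finset.sum_congr rfl fun j _ => ?_
    rw [Matrix.mul_apply]
    rfl
  have hB00 : B 0 0 = σ * α₁ * α₃ - σs := by
    rw [hBpq]
    calc ∑ j, (∑ i, U i 0 * A i j) * V j 0
        = ∑ j, (σ * α₁ * (α₃ * v₁ j + α₄ * v₂ j) - σs * v₁ j) * v₁ j := by
          refine Finset.sum_congr rfl fun j _ => ?_
          have : ∑ i, U i 0 * A i j = ∑ i, u₁ i * A i j :=
            Finset.sum_congr rfl fun i _ => by simp [hU]
          rw [this, key1]; simp [hV]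
      _ = (σ * α₁ * α₃ - σs) * (∑ j, v₁ j ^ 2) + (σ * α₁ * α₄) * (∑ j, v₁ j * v₂ j) := by
          rw [Finset.mul_sum, Finset.mul_sum, ← Finset.sum_add_distrib]
          exact Finset.sum_congr rfl fun j _ => by ring
      _ = _ := by rw [hv₁, hv₁₂]; ring
  have hB01 : B 0 1 = σ * α₁ * α₄ := by
    rw [hBpq]
    calc ∑ j, (∑ i, U i 0 * A i j) * V j 1
        = ∑ j, (σ * α₁ * (α₃ * v₁ j + α₄ * v₂ j) - σs * v₁ j) * v₂ j := by
          refine Finset.sum_congr rfl fun j _ => ?_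
          have : ∑ i, U i 0 * A i j = ∑ i, u₁ i * A i j :=
            Finset.sum_congr rfl fun i _ => by simp [hU]
          rw [this, key1]; simp [hV]
      _ = (σ * α₁ * α₄) * (∑ j, v₂ j ^ 2) + (σ * α₁ * α₃ - σs) * (∑ j, v₁ j * v₂ j) := by
          rw [Finset.mul_sum, Finset.mul_sum, ← Finset.sum_add_distrib]
          exact Finset.sum_congr rfl fun j _ => by ring
      _ = _ := by rw [hv₂, hv₁₂]; ring
  have hB10 : B 1 0 = σ * α₂ * α₃ := by
    rw [hBpq]
    calc ∑ j, (∑ i, U i 1 * A i j) * V j 0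
        = ∑ j, (σ * α₂ * (α₃ * v₁ j + α₄ * v₂ j) - σs * v₂ j) * v₁ j := by
          refine Finset.sum_congr rfl fun j _ => ?_
          have : ∑ i, U i 1 * A i j = ∑ i, u₂ i * A i j :=
            Finset.sum_congr rfl fun i _ => by simp [hU]
          rw [this, key2]; simp [hV]
      _ = (σ * α₂ * α₃) * (∑ j, v₁ j ^ 2) + (σ * α₂ * α₄ - σs) * (∑ j, v₁ j * v₂ j) := by
          rw [Finset.mul_sum, Finset.mul_sum, ← Finset.sum_add_distrib]
          exact Finset.sum_congr rfl fun j _ => by ring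
      _ = _ := by rw [hv₁, hv₁₂]; ring
  have hB11 : B 1 1 = σ * α₂ * α₄ - σs := by
    rw [hBpq]
    calc ∑ j, (∑ i, U i 1 * A i j) * V j 1
        = ∑ j, (σ * α₂ * (α₃ * v₁ j + α₄ * v₂ j) - σs * v₂ j) * v₂ j := by
          refine Finset.sum_congr rfl fun j _ => ?_
          have : ∑ i, U i 1 * A i j = ∑ i, u₂ i * A i j :=
            Finset.sum_congr rfl fun i _ => by simp [hU]
          rw [this, key2]; simp [hV]
      _ = (σ * α₂ * α₄ - σs) * (∑ j, v₂ j ^ 2) + (σ * α₂ * α₃) * (∑ j, v₁ j * v₂ j) := by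
          rw [Finset.mul_sum, Finset.mul_sum, ← Finset.sum_add_distrib]
          exact Finset.sum_congr rfl fun j _ => by ring
      _ = _ := by rw [hv₂, hv₁₂]; ring
  -- det B = 0
  have hdet : B.det = 0 := by
    by_contra h
    have hunit : IsUnit B := (Matrix.isUnit_iff_isUnit_det B).2 (isUnit_iff_ne_zero.2 h)
    have := Matrix.rank_of_isUnit B hunit
    rw [this] at hrB
    simp [Fintype.card_fin] at hrB
  rw [Matrix.det_fin_two, hB00, hB01, hB10, hB11] at hdet
  -- conclude
  have hσne : σ ≠ 0 := ne_of_gt hσ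
  have hσsne : σs ≠ 0 := ne_of_gt hσs
  field_simp
  nlinarith [hdet]
end
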